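/- arXiv:0810.2877 — 2 statements merged into one kernel-verified Lean document; each statement's English description precedes it below -/
import Mathlib

section
/- Let M be a monoid, I a set, and θ a family of congruences on M indexed by I such that the infimum of all θ(i) is the trivial congruence (if (a,b) ∈ θ(i) for all i ∈ I then a = b). Equip I with the coarsest S-topology (generated by the sets E(a,b), a, b ∈ M, as a subbasis) and F with the corresponding generated topology. Call a family (c_i)_{i∈I} of elements of M global with respect to θ if for every i ∈ I there exist n ≥ 1 and elements a_1, …, a_n, b_1, …, b_n ∈ M with (a_j, b_j) ∈ θ(i) for all j = 1, …, n, such that for every k ∈ I, if (a_j, b_j) ∈ θ(k) for all j = 1, …, n then (c_k, c_i) ∈ θ(k). Then the map α sending m ∈ M to the section i ↦ (i, ⟦m⟧_i) is a bijection from M onto the set of continuous sections of f if and only if for every global family (c_i)_{i∈I} there exists c ∈ M with (c, c_i) ∈ θ(i) for all i ∈ I. -/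
/-!
A section `s` of `F → I` is continuous iff for every `m` the set `{i | s i = ⟦m⟧ᵢ}` is open.
Writing `s i = ⟦c i⟧ᵢ`, in the coarsest S-topology this says exactly that each
`{k | (c k, c i) ∈ θ k}` is a neighbourhood of `i`, i.e. contains a finite intersection of
sets `E(a, b)` around `i`: that is, `c` is global. So the continuous sections are exactly the
classes of global families, and `α` is onto them iff every global family lifts; injectivity
of `α` is the triviality of the infimum of `θ`.
-/

open Topology

/-- The topology on `F = Σ i, M/θ i` generated by the subbasis of sets
`[m](U) = {(i, ⟦m⟧ᵢ) : i ∈ U}` for `m ∈ M` and `U` open in `τ`. -/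
def etaleTop {M I : Type*} [Monoid M] (θ : I → Con M) (τ : TopologicalSpace I) :
    TopologicalSpace ((i : I) × (θ i).Quotient) :=
  TopologicalSpace.generateFrom
    {V | ∃ (m : M) (U : Set I), τ.IsOpen U ∧
      V = (fun i => (⟨i, (↑m : (θ i).Quotient)⟩ : (i : I) × (θ i).Quotient)) '' U}

/-- The coarsest S-topology on `I` for `θ`: generated by the equalizer sets
`E(a,b) = {i : (a,b) ∈ θ i}` as a subbasis. -/
def coarsestSTop {M I : Type*} [Monoid M] (θ : I → Con M) : TopologicalSpace I :=
  TopologicalSpace.generateFrom {V : Set I | ∃ a b : M, V = {i : I | θ i a b}}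

/-- A family `(c i)_{i ∈ I}` of elements of `M` is *global* w.r.t. `θ` if for every
`i` there are finitely many pairs `(a j, b j)`, `j = 1, …, n` (`n ≥ 1`), with
`(a j, b j) ∈ θ i` for all `j`, such that for every `k`, if `(a j, b j) ∈ θ k` for all
`j` then `(c k, c i) ∈ θ k`. -/
def IsGlobalFamily {M I : Type*} [Monoid M] (θ : I → Con M) (c : I → M) : Prop :=
  ∀ i : I, ∃ n : ℕ, 1 ≤ n ∧ ∃ a b : Fin n → M,
    (∀ j, θ i (a j) (b j)) ∧
    ∀ k : I, (∀ j, θ k (a j) (b j)) → θ k (c k) (c i)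

section

variable {M I : Type*} [Monoid M] (θ : I → Con M)

lemma Sigma.preimage_mk_image_mk {β : I → Type*} (s t : ∀ i, β i) (U : Set I) :
    (fun i => (⟨i, s i⟩ : Sigma β)) ⁻¹' ((fun i => (⟨i, t i⟩ : Sigma β)) '' U) =
      U ∩ {i | s i = t i} := by
  ext k
  simp [eq_comm]

lemma continuous_sigmaMk_etaleTop_iff (τ : TopologicalSpace I) (s : ∀ i, (θ i).Quotient) :
    Continuous[τ, etaleTop θ τ] (fun i => (⟨i, s i⟩ : (i : I) × (θ i).Quotient)) ↔
      ∀ m : M, IsOpen[τ] {i | s i = m} := by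
  rw [etaleTop, continuous_generateFrom_iff]
  constructor
  · intro h m
    simpa only [Sigma.preimage_mk_image_mk, Set.univ_inter] using
      h _ ⟨m, Set.univ, τ.isOpen_univ, rfl⟩
  · rintro h _ ⟨m, U, hU, rfl⟩
    rw [Sigma.preimage_mk_image_mk]
    exact τ.isOpen_inter U _ hU (h m)

lemma isOpen_coarsestSTop_setOf (a b : M) : IsOpen[coarsestSTop θ] {i | θ i a b} :=
  TopologicalSpace.isOpen_generateFrom_of_mem ⟨a, b, rfl⟩

lemma exists_pairs_of_isOpen_coarsestSTop {W : Set I} (hW : IsOpen[coarsestSTop θ] W) {i : I}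
    (hi : i ∈ W) :
    ∃ n : ℕ, 1 ≤ n ∧ ∃ a b : Fin n → M,
      (∀ j, θ i (a j) (b j)) ∧ ∀ k : I, (∀ j, θ k (a j) (b j)) → k ∈ W := by
  induction hW with
  | basic V hV =>
    obtain ⟨a, b, rfl⟩ := hV
    exact ⟨1, le_rfl, fun _ => a, fun _ => b, fun _ => hi, fun k hk => hk 0⟩
  | univ =>
    exact ⟨1, le_rfl, fun _ => 1, fun _ => 1, fun _ => (θ i).refl 1, fun _ _ => trivial⟩
  | inter U V _ _ ihU ihV =>
    obtain ⟨n₁, hn₁, a₁, b₁, hi₁, hU⟩ := ihU hi.1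
    obtain ⟨n₂, -, a₂, b₂, hi₂, hV⟩ := ihV hi.2
    refine ⟨n₁ + n₂, by omega, Fin.append a₁ a₂, Fin.append b₁ b₂, ?_⟩
    simp only [Fin.forall_fin_add, Fin.append_left, Fin.append_right]
    exact ⟨⟨hi₁, hi₂⟩, fun k hk => ⟨hU k hk.1, hV k hk.2⟩⟩
  | sUnion T _ ih =>
    obtain ⟨t, htT, hit⟩ := hi
    obtain ⟨n, hn, a, b, hab, ht⟩ := ih t htT hit
    exact ⟨n, hn, a, b, hab, fun k hk => ⟨t, htT, ht k hk⟩⟩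

lemma mem_nhds_coarsestSTop_iff {S : Set I} {i : I} :
    S ∈ @nhds I (coarsestSTop θ) i ↔
      ∃ n : ℕ, 1 ≤ n ∧ ∃ a b : Fin n → M,
        (∀ j, θ i (a j) (b j)) ∧ ∀ k : I, (∀ j, θ k (a j) (b j)) → k ∈ S := by
  let := coarsestSTop θ
  constructor
  · intro hS
    obtain ⟨W, hWS, hW, hiW⟩ := mem_nhds_iff.1 hS
    obtain ⟨n, hn, a, b, hab, hW⟩ := exists_pairs_of_isOpen_coarsestSTop θ hW hiW
    exact ⟨n, hn, a, b, hab, fun k hk => hWS (hW k hk)⟩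
  · rintro ⟨n, -, a, b, hab, hS⟩
    refine Filter.mem_of_superset ?_ fun k hk => hS k (Set.mem_iInter.1 hk)
    exact (isOpen_iInter_of_finite fun j => isOpen_coarsestSTop_setOf θ (a j) (b j)).mem_nhds
      (Set.mem_iInter.2 hab)

lemma isGlobalFamily_iff_mem_nhds (c : I → M) :
    IsGlobalFamily θ c ↔ ∀ i, {k | θ k (c k) (c i)} ∈ @nhds I (coarsestSTop θ) i :=
  forall_congr' fun _ => (mem_nhds_coarsestSTop_iff θ).symm

lemma isGlobalFamily_const (m : M) : IsGlobalFamily θ fun _ => m :=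
  fun i => ⟨1, le_rfl, fun _ => 1, fun _ => 1, fun _ => (θ i).refl 1, fun k _ => (θ k).refl m⟩

lemma continuous_sigmaMk_coarsestSTop_iff_isGlobalFamily (c : I → M) :
    Continuous[coarsestSTop θ, etaleTop θ (coarsestSTop θ)]
        (fun i => (⟨i, (c i : (θ i).Quotient)⟩ : (i : I) × (θ i).Quotient)) ↔
      IsGlobalFamily θ c := by
  let := coarsestSTop θ
  simp only [continuous_sigmaMk_etaleTop_iff, isGlobalFamily_iff_mem_nhds, Con.eq]
  constructor
  · exact fun h i => (h (c i)).mem_nhds ((θ i).refl _)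
  · refine fun h m => isOpen_iff_mem_nhds.2 fun k hk => ?_
    -- near `k`, `c` stays congruent to `c k`, which is congruent to `m` on the open set `E(c k, m)`
    filter_upwards [h k, (isOpen_coarsestSTop_setOf θ (c k) m).mem_nhds hk] with k' h₁ h₂
    exact (θ k').trans h₁ h₂

end

/-- Let `M` be a monoid and `θ` a family of congruences on `M` with
trivial infimum (`(a,b) ∈ θ i` for all `i` implies `a = b`). Equip `I` with the coarsest
S-topology and `F = Σ i, M/θ i` with the corresponding generated topology. Then the map
`α : m ↦ (i ↦ (i, ⟦m⟧ᵢ))` is a bijection from `M` onto the set of continuous sections of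
`Sigma.fst : F → I` (sections being encoded as dependent families) if and only if every
global family `(c i)` w.r.t. `θ` lifts: there is `c ∈ M` with `(c, c i) ∈ θ i` for all
`i`. -/
theorem stmt10 {M I : Type*} [Monoid M] (θ : I → Con M)
    (hsub : ∀ a b : M, (∀ i : I, θ i a b) → a = b) :
    (Function.Injective (fun (m : M) (i : I) => (↑m : (θ i).Quotient)) ∧
      Set.range (fun (m : M) (i : I) => (↑m : (θ i).Quotient)) =
        {s : ∀ i : I, (θ i).Quotient |
          Continuous[coarsestSTop θ, etaleTop θ (coarsestSTop θ)]
            fun i => (⟨i, s i⟩ : (i : I) × (θ i).Quotient)}) ↔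
    ∀ c : I → M, IsGlobalFamily θ c → ∃ m : M, ∀ i : I, θ i m (c i) := by
  have hlift (s : ∀ i, (θ i).Quotient) : ∃ c : I → M, (fun i => (c i : (θ i).Quotient)) = s :=
    ⟨fun i => (s i).out, funext fun i => Quotient.out_eq (s i)⟩
  constructor
  · rintro ⟨-, hrange⟩ c hc
    obtain ⟨m, hm⟩ : (fun i => (c i : (θ i).Quotient)) ∈ Set.range _ := by
      rw [hrange]; exact (continuous_sigmaMk_coarsestSTop_iff_isGlobalFamily θ c).2 hc
    exact ⟨m, fun i => (θ i).eq.1 (congrFun hm i)⟩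
  · intro hglobal
    refine ⟨fun m m' h => hsub m m' fun i => (θ i).eq.1 (congrFun h i), ?_⟩
    refine Set.Subset.antisymm ?_ fun s hs => ?_
    · rintro _ ⟨m, rfl⟩
      exact (continuous_sigmaMk_coarsestSTop_iff_isGlobalFamily θ _).2 (isGlobalFamily_const θ m)
    · obtain ⟨c, rfl⟩ := hlift s
      obtain ⟨m, hm⟩ := hglobal c ((continuous_sigmaMk_coarsestSTop_iff_isGlobalFamily θ c).1 hs)
      exact ⟨m, funext fun i => (θ i).eq.2 (hm i)⟩
end

section
/- Let (A,D) be a dependence graph and let (A_j, D_j), j ∈ J, be a (possibly infinite) family of subgraphs of (A,D) with A = ⋃_{j∈J} A_j and D = ⋃_{j∈J} D_j, and suppose that every a ∈ A belongs to A_j for only finitely many j ∈ J. Then for every t ∈ M(A,D) the set {j ∈ J : π_{(A_j,D_j)}(t) ≠ 1} is finite, and the resulting monoid homomorphism from M(A,D) into the weak direct product ⊕_{j∈J} M(A_j,D_j) = {(w_j)_{j∈J} ∈ ∏_{j∈J} M(A_j,D_j) : w_j = 1 for all but finitely many j} is injective. -/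
/-- The pairs generating the trace congruence: `a·b ~ b·a` for independent letters
(`¬ D a b`). -/
def TraceRel (A : Type*) (D : A → A → Prop) :
    FreeMonoid A → FreeMonoid A → Prop := fun x y =>
  ∃ a b : A, ¬ D a b ∧ x = FreeMonoid.of a * FreeMonoid.of b ∧
    y = FreeMonoid.of b * FreeMonoid.of a

/-- The trace congruence on the free monoid over `A` w.r.t. the dependence relation
`D`. -/
def traceCon (A : Type*) (D : A → A → Prop) : Con (FreeMonoid A) :=
  conGen (TraceRel A D)

/-- The trace monoid `M(A,D)`: the quotient of the free monoid on `A` by the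
congruence generated by `a·b = b·a` for all `a, b` with `¬ D a b`. -/
abbrev TraceMonoid (A : Type*) (D : A → A → Prop) := (traceCon A D).Quotient

/-!
A trace is determined by its projections to the pairs `{a, b}` of dependent letters: if two words
have the same projections, the first letter `a` of one word is independent of every letter that
precedes the first `a` in the other word, so it can be moved to the front there and cancelled.
Every dependent pair lies in some `D' j`, and projections to dependent pairs are trace invariants
of `M(A' j, D' j)`, so they can be read off from the images under `π j`. Finiteness holds because
a word has finitely many letters, each lying in finitely many `A' j`.
-/

theorem List.filter_eq_of_filter_cons_eq {A : Type*} {p : A → Bool} {a : A} {l₁ l₂ : List A}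
    (h : (a :: l₁).filter p = (a :: l₂).filter p) : l₁.filter p = l₂.filter p := by
  cases hpa : p a <;> simp_all

section DependentPairs

variable {A : Type*} [DecidableEq A]

def inPair (a b c : A) : Bool := decide (c = a ∨ c = b)

theorem inPair_left (a b : A) : inPair a b a := by simp [inPair]

theorem inPair_right (a b : A) : inPair a b b := by simp [inPair]

theorem rel_of_inPair {R : A → A → Prop} {a b c d : A} (haa : R a a) (hbb : R b b)
    (hab : R a b) (hba : R b a) (hc : inPair a b c) (hd : inPair a b d) : R c d := by
  simp only [inPair, decide_eq_true_eq] at hc hd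
  rcases hc with rfl | rfl <;> rcases hd with rfl | rfl <;> assumption

theorem mem_of_inPair {s : Set A} {a b c : A} (ha : a ∈ s) (hb : b ∈ s) (hc : inPair a b c) :
    c ∈ s := by
  simp only [inPair, decide_eq_true_eq] at hc
  rcases hc with rfl | rfl <;> assumption

end DependentPairs

section Projection

variable {A : Type*} (S : Set A) [DecidablePred (· ∈ S)]

def projectList (l : List A) : List S :=
  l.filterMap fun a => if h : a ∈ S then some ⟨a, h⟩ else none

variable {S}

theorem projectList_eq_nil {l : List A} (h : ∀ a ∈ l, a ∉ S) : projectList S l = [] :=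
  List.filterMap_eq_nil_iff.2 fun a ha => dif_neg (h a ha)

theorem map_val_filter_projectList {p : A → Bool} (hp : ∀ c, p c → c ∈ S) (l : List A) :
    ((projectList S l).filter fun c : S => p c).map Subtype.val = l.filter p := by
  induction l with
  | nil => rfl
  | cons a l ih =>
    by_cases ha : a ∈ S
    · by_cases hpa : p a <;> simp_all [projectList]
    · have hpa : ¬ p a := fun hpa => ha (hp a hpa)
      simp_all [projectList]

end Projection

namespace TraceMonoid

open FreeMonoid

variable {A : Type*} {D : A → A → Prop}

theorem exists_ofList_eq (t : TraceMonoid A D) :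
    ∃ l : List A, ((ofList l : FreeMonoid A) : TraceMonoid A D) = t :=
  Con.induction_on t fun x => ⟨x.toList, by rw [ofList_toList]⟩

theorem commute_of_not_rel {a b : A} (h : ¬ D a b) :
    Commute ((of a : FreeMonoid A) : TraceMonoid A D) (of b : FreeMonoid A) := by
  rw [Commute, SemiconjBy, ← Con.coe_mul, ← Con.coe_mul, Con.eq]
  exact ConGen.Rel.of _ _ ⟨a, b, h, rfl, rfl⟩

theorem commute_ofList_of {a : A} {l : List A} (h : ∀ b ∈ l, ¬ D b a) :
    Commute ((ofList l : FreeMonoid A) : TraceMonoid A D) (of a : FreeMonoid A) := by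
  induction l with
  | nil => exact Commute.one_left _
  | cons b l ih =>
    rw [ofList_cons, Con.coe_mul]
    exact (commute_of_not_rel (h b List.mem_cons_self)).mul_left
      (ih fun c hc => h c (List.mem_cons_of_mem b hc))

theorem ofList_append_cons_eq {a : A} {l₁ l₂ : List A} (h : ∀ b ∈ l₁, ¬ D b a) :
    ((ofList (l₁ ++ a :: l₂) : FreeMonoid A) : TraceMonoid A D) =
      (ofList (a :: (l₁ ++ l₂)) : FreeMonoid A) := by
  simp only [ofList_append, ofList_cons, Con.coe_mul, ← mul_assoc,
    (commute_ofList_of h).eq]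

theorem filter_toList_eq_of_eq {p : A → Bool} (hp : ∀ c d, p c → p d → D c d)
    {x y : FreeMonoid A} (h : (x : TraceMonoid A D) = y) :
    x.toList.filter p = y.toList.filter p := by
  have hrel : ConGen.Rel (TraceRel A D) x y := Con.eq _ |>.1 h
  clear h
  induction hrel with
  | of x y hxy =>
    obtain ⟨c, d, hcd, rfl, rfl⟩ := hxy
    by_cases hc : p c <;> by_cases hd : p d <;>
      simp_all [toList_mul, toList_of, List.filter]
  | refl => rfl
  | symm _ ih => exact ih.symm
  | trans _ _ ih₁ ih₂ => exact ih₁.trans ih₂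
  | mul _ _ ih₁ ih₂ => simp only [toList_mul, List.filter_append, ih₁, ih₂]

theorem ofList_eq_of_filter_inPair_eq [DecidableEq A] (hrefl : ∀ a, D a a)
    (hsymm : ∀ a b, D a b → D b a)
    {u v : List A} (h : ∀ a b, D a b → u.filter (inPair a b) = v.filter (inPair a b)) :
    ((ofList u : FreeMonoid A) : TraceMonoid A D) = (ofList v : FreeMonoid A) := by
  induction u generalizing v with
  | nil =>
    obtain rfl : v = [] := List.eq_nil_iff_forall_not_mem.2 fun c hc => by
      simpa [inPair_left, hc] using congrArg (c ∈ ·) (h c c (hrefl c))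
    rfl
  | cons a u ih =>
    have hav : a ∈ v := by
      simpa [inPair_left] using congrArg (a ∈ ·) (h a a (hrefl a))
    obtain ⟨l₁, l₂, rfl, hal₁⟩ := List.eq_append_cons_of_mem hav
    -- a letter of `l₁` dependent on `a` would precede `a` in the projection to that pair
    have hindep : ∀ b ∈ l₁, ¬ D b a := by
      intro b hb hba
      obtain ⟨c, r, hcr⟩ := List.exists_cons_of_ne_nil
        (List.ne_nil_of_mem (List.mem_filter.2 ⟨hb, inPair_left b a⟩))
      have hc : c ∈ l₁ := (List.mem_filter.1 (hcr ▸ List.mem_cons_self)).1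
      have hproj := h b a hba
      rw [List.filter_append, hcr, List.filter_cons_of_pos (inPair_right b a)] at hproj
      exact hal₁ (List.head_eq_of_cons_eq hproj ▸ hc)
    have hmove := ofList_append_cons_eq (D := D) (l₂ := l₂) hindep
    rw [hmove, ofList_cons, ofList_cons, Con.coe_mul, Con.coe_mul, ih]
    intro a' b' hD
    refine List.filter_eq_of_filter_cons_eq ((h a' b' hD).trans ?_)
    exact filter_toList_eq_of_eq (fun c d hc hd =>
      rel_of_inPair (hrefl a') (hrefl b') hD (hsymm a' b' hD) hc hd) hmove

theorem map_ofList_eq_projectList {S : Set A} [DecidablePred (· ∈ S)] {E : S → S → Prop}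
    (φ : TraceMonoid A D →* TraceMonoid S E)
    (hmem : ∀ a (h : a ∈ S), φ ((of a : FreeMonoid A) : TraceMonoid A D) =
      ((of ⟨a, h⟩ : FreeMonoid S) : TraceMonoid S E))
    (hnot : ∀ a, a ∉ S → φ ((of a : FreeMonoid A) : TraceMonoid A D) = 1) (l : List A) :
    φ (ofList l : FreeMonoid A) = (ofList (projectList S l) : FreeMonoid S) := by
  induction l with
  | nil => exact map_one φ
  | cons a l ih =>
    rw [ofList_cons, Con.coe_mul, map_mul, ih]
    by_cases ha : a ∈ S
    · simp [projectList, ha, hmem]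
    · simp [projectList, ha, hnot]

theorem filter_eq_of_projectList_eq {S : Set A} [DecidablePred (· ∈ S)] {E : S → S → Prop}
    {p : A → Bool} (hpS : ∀ c, p c → c ∈ S)
    (hp : ∀ c d : S, p c → p d → E c d) {u v : List A}
    (h : ((ofList (projectList S u) : FreeMonoid S) : TraceMonoid S E) =
      (ofList (projectList S v) : FreeMonoid S)) :
    u.filter p = v.filter p := by
  rw [← map_val_filter_projectList hpS u, ← map_val_filter_projectList hpS v]
  exact congrArg (List.map Subtype.val) (filter_toList_eq_of_eq (p := fun c : S => p c) hp h)

end TraceMonoid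

theorem stmt12_general {A : Type*} (D : A → A → Prop)
    (hD_refl : ∀ a, D a a) (hD_symm : ∀ a b, D a b → D b a)
    {J : Type*}
    (A' : J → Set A) (D' : J → A → A → Prop)
    (hsupp : ∀ j a b, D' j a b → a ∈ A' j ∧ b ∈ A' j)
    (hrefl' : ∀ j, ∀ a ∈ A' j, D' j a a)
    (hsymm' : ∀ j a b, D' j a b → D' j b a)
    (hcoverD : ∀ a b : A, D a b ↔ ∃ j, D' j a b)
    (hfin_letter : ∀ a : A, {j : J | a ∈ A' j}.Finite)
    (π : ∀ j, TraceMonoid A D →* TraceMonoid (A' j) (fun x y => D' j x y))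
    (hπ_mem : ∀ j (a : A) (h : a ∈ A' j),
      π j ((FreeMonoid.of a : FreeMonoid A) : TraceMonoid A D) =
        ((FreeMonoid.of (⟨a, h⟩ : A' j) : FreeMonoid (A' j)) :
          TraceMonoid (A' j) (fun x y => D' j x y)))
    (hπ_not : ∀ j (a : A), a ∉ A' j →
      π j ((FreeMonoid.of a : FreeMonoid A) : TraceMonoid A D) = 1) :
    ∃ hfin : ∀ t : TraceMonoid A D, {j : J | π j t ≠ 1}.Finite,
      Function.Injective (fun t : TraceMonoid A D =>
        (⟨fun j => π j t, hfin t⟩ :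
          {w : ∀ j, TraceMonoid (A' j) (fun x y => D' j x y) //
            {j : J | w j ≠ 1}.Finite})) := by
  classical
  have hπ j := TraceMonoid.map_ofList_eq_projectList (π j) (hπ_mem j) (hπ_not j)
  refine ⟨fun t => ?_, fun s t hst => ?_⟩
  · obtain ⟨l, rfl⟩ := TraceMonoid.exists_ofList_eq t
    refine ((List.finite_toSet l).biUnion fun a _ => hfin_letter a).subset fun j hj => ?_
    by_contra hl
    simp only [Set.mem_iUnion, Set.mem_ofPred_eq, exists_prop, not_exists, not_and] at hl
    exact hj (by rw [hπ, projectList_eq_nil hl]; rfl)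
  · obtain ⟨u, rfl⟩ := TraceMonoid.exists_ofList_eq s
    obtain ⟨v, rfl⟩ := TraceMonoid.exists_ofList_eq t
    refine TraceMonoid.ofList_eq_of_filter_inPair_eq hD_refl hD_symm fun a b hab => ?_
    obtain ⟨j, hj⟩ := (hcoverD a b).1 hab
    obtain ⟨ha, hb⟩ := hsupp j a b hj
    refine TraceMonoid.filter_eq_of_projectList_eq (S := A' j) (E := fun x y => D' j x y)
      (fun c => mem_of_inPair ha hb)
      (fun c d => rel_of_inPair (hrefl' j a ha) (hrefl' j b hb) hj (hsymm' j a b hj)) ?_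
    rw [← hπ, ← hπ]
    exact congrFun (congrArg Subtype.val hst) j

/-- Let `(A,D)` be a dependence graph, `(A' j, D' j)`, `j ∈ J`, a
(possibly infinite) family of subgraphs covering `(A,D)` (`A = ⋃ⱼ A' j`,
`D = ⋃ⱼ D' j`), such that every letter `a ∈ A` lies in `A' j` for only finitely many
`j`. Let `π j` be the canonical projections. Then for every `t ∈ M(A,D)` the set
`{j : π j t ≠ 1}` is finite, and the resulting homomorphism
`t ↦ (π j t)ⱼ` into the weak direct product
`{(w j)ⱼ : w j = 1 for all but finitely many j}` is injective. -/
theorem stmt12 {A : Type*} (D : A → A → Prop)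
    (hD_refl : ∀ a, D a a) (hD_symm : ∀ a b, D a b → D b a)
    {J : Type*}
    (A' : J → Set A) (D' : J → A → A → Prop)
    (hsub : ∀ j a b, D' j a b → D a b)
    (hsupp : ∀ j a b, D' j a b → a ∈ A' j ∧ b ∈ A' j)
    (hrefl' : ∀ j, ∀ a ∈ A' j, D' j a a)
    (hsymm' : ∀ j a b, D' j a b → D' j b a)
    (hcoverA : ∀ a : A, ∃ j, a ∈ A' j)
    (hcoverD : ∀ a b : A, D a b ↔ ∃ j, D' j a b)
    (hfin_letter : ∀ a : A, {j : J | a ∈ A' j}.Finite)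
    (π : ∀ j, TraceMonoid A D →* TraceMonoid (A' j) (fun x y => D' j x y))
    (hπ_mem : ∀ j (a : A) (h : a ∈ A' j),
      π j ((FreeMonoid.of a : FreeMonoid A) : TraceMonoid A D) =
        ((FreeMonoid.of (⟨a, h⟩ : A' j) : FreeMonoid (A' j)) :
          TraceMonoid (A' j) (fun x y => D' j x y)))
    (hπ_not : ∀ j (a : A), a ∉ A' j →
      π j ((FreeMonoid.of a : FreeMonoid A) : TraceMonoid A D) = 1) :
    ∃ hfin : ∀ t : TraceMonoid A D, {j : J | π j t ≠ 1}.Finite,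
      Function.Injective (fun t : TraceMonoid A D =>
        (⟨fun j => π j t, hfin t⟩ :
          {w : ∀ j, TraceMonoid (A' j) (fun x y => D' j x y) //
            {j : J | w j ≠ 1}.Finite})) :=
  stmt12_general D hD_refl hD_symm A' D' hsupp hrefl' hsymm' hcoverD hfin_letter π hπ_mem hπ_not
end
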